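/- Let Ψ be strictly decreasing, nonnegative and right-continuous on I = (a,b), and let f be Ψ-concave on I. Then D⁺_Ψ f is right-continuous on I. -/

import Mathlib

/-! The three-slope inequality makes `x ↦ psiSlope Ψ f x y` increasing on `(y, b)`, so `D⁺_Ψ f y` is
the infimum of these slopes. Hence `D⁺_Ψ f` is monotone, which gives the lower half of right
continuity. For the upper half, fix `z > y` whose slope is close to `D⁺_Ψ f y`: the slope
`psiSlope Ψ f y' z` is right-continuous in `y'` (both `f` and `Ψ` are), and it bounds `D⁺_Ψ f y'`. -/

open Set Filter Topology

def PsiConcaveOn (Ψ f : ℝ → ℝ) (a b : ℝ) : Prop :=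
  ∀ x y z : ℝ, x ∈ Set.Ioo a b → y ∈ Set.Ioo a b → z ∈ Set.Ioo a b →
    x < y → y < z →
    (f x - f y) / (Ψ x - Ψ y) ≤ (f y - f z) / (Ψ y - Ψ z)

noncomputable def psiSlope (Ψ f : ℝ → ℝ) (x y : ℝ) : ℝ := (f x - f y) / (Ψ x - Ψ y)

lemma psiSlope_comm (Ψ f : ℝ → ℝ) (x y : ℝ) : psiSlope Ψ f x y = psiSlope Ψ f y x := by
  rw [psiSlope, psiSlope, ← neg_sub (f x), ← neg_sub (Ψ x), neg_div_neg_eq]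

lemma add_div_add_mem_Icc {a b c d : ℝ} (hc : 0 < c) (hd : 0 < d) (h : a / c ≤ b / d) :
    (a + b) / (c + d) ∈ Icc (a / c) (b / d) := by
  rw [div_le_div_iff₀ hc hd] at h
  constructor
  · rw [div_le_div_iff₀ hc (by positivity)]; nlinarith
  · rw [div_le_div_iff₀ (by positivity) hd]; nlinarith

theorem tendsto_of_tendsto_psiSlope {Ψ f : ℝ → ℝ} {l : Filter ℝ} {y d : ℝ}
    (hΨ : Tendsto Ψ l (𝓝 (Ψ y))) (hd : Tendsto (psiSlope Ψ f · y) l (𝓝 d))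
    (hne : ∀ᶠ x in l, Ψ x ≠ Ψ y) : Tendsto f l (𝓝 (f y)) := by
  have h := (hd.mul (hΨ.sub_const (Ψ y))).add_const (f y)
  rw [sub_self, mul_zero, zero_add] at h
  refine h.congr' ?_
  filter_upwards [hne] with x hx
  rw [psiSlope, div_mul_cancel₀ _ (sub_ne_zero.2 hx), sub_add_cancel]

section PsiConcave

variable {a b : ℝ} {Ψ f D : ℝ → ℝ}

theorem PsiConcaveOn.psiSlope_mem_Icc (hf : PsiConcaveOn Ψ f a b) (hΨ : StrictAntiOn Ψ (Ioo a b))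
    {u v w : ℝ} (hu : u ∈ Ioo a b) (hv : v ∈ Ioo a b) (hw : w ∈ Ioo a b) (huv : u < v)
    (hvw : v < w) : psiSlope Ψ f u w ∈ Icc (psiSlope Ψ f u v) (psiSlope Ψ f v w) := by
  have h := add_div_add_mem_Icc (sub_pos.2 (hΨ hu hv huv)) (sub_pos.2 (hΨ hv hw hvw))
    (hf u v w hu hv hw huv hvw)
  rwa [sub_add_sub_cancel, sub_add_sub_cancel] at h

theorem PsiConcaveOn.le_psiSlope (hf : PsiConcaveOn Ψ f a b) (hΨ : StrictAntiOn Ψ (Ioo a b))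
    {p z d : ℝ} (hp : p ∈ Ioo a b) (hz : z ∈ Ioo p b)
    (hd : Tendsto (psiSlope Ψ f · p) (𝓝[Ioo p b] p) (𝓝 d)) : d ≤ psiSlope Ψ f z p := by
  rw [nhdsWithin_Ioo_eq_nhdsGT hp.2] at hd
  refine le_of_tendsto hd (eventually_of_mem (Ioo_mem_nhdsGT hz.1) fun x hx => ?_)
  rw [psiSlope_comm, psiSlope_comm Ψ f z]
  exact (hf.psiSlope_mem_Icc hΨ hp ⟨hp.1.trans hx.1, hx.2.trans hz.2⟩
    ⟨hp.1.trans hz.1, hz.2⟩ hx.1 hx.2).1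

theorem PsiConcaveOn.monotoneOn_of_tendsto_psiSlope (hf : PsiConcaveOn Ψ f a b)
    (hΨ : StrictAntiOn Ψ (Ioo a b))
    (hD : ∀ y ∈ Ioo a b, Tendsto (psiSlope Ψ f · y) (𝓝[Ioo y b] y) (𝓝 (D y))) :
    MonotoneOn D (Ioo a b) := by
  intro y hy y' hy' hyy'
  rcases hyy'.eq_or_lt with rfl | hlt
  · rfl
  have : (𝓝[Ioo y' b] y').NeBot := nhdsWithin_Ioo_eq_nhdsGT hy'.2 ▸ nhdsGT_neBot y'
  refine ge_of_tendsto (hD y' hy') ?_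
  filter_upwards [self_mem_nhdsWithin] with z hz
  have hzI : z ∈ Ioo a b := ⟨hy'.1.trans hz.1, hz.2⟩
  calc D y ≤ psiSlope Ψ f z y := hf.le_psiSlope hΨ hy ⟨hlt.trans hz.1, hz.2⟩ (hD y hy)
    _ = psiSlope Ψ f y z := psiSlope_comm Ψ f z y
    _ ≤ psiSlope Ψ f y' z := (hf.psiSlope_mem_Icc hΨ hy hy' hzI hlt hz.1).2
    _ = psiSlope Ψ f z y' := psiSlope_comm Ψ f y' z

theorem PsiConcaveOn.eventually_lt_of_tendsto_psiSlope {y c : ℝ}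
    (hf : PsiConcaveOn Ψ f a b) (hΨ : StrictAntiOn Ψ (Ioo a b)) (hy : y ∈ Ioo a b)
    (hΨy : Tendsto Ψ (𝓝[Ioo y b] y) (𝓝 (Ψ y)))
    (hD : ∀ y ∈ Ioo a b, Tendsto (psiSlope Ψ f · y) (𝓝[Ioo y b] y) (𝓝 (D y)))
    (hc : D y < c) : ∀ᶠ y' in 𝓝[Ioo y b] y, D y' < c := by
  have : (𝓝[Ioo y b] y).NeBot := nhdsWithin_Ioo_eq_nhdsGT hy.2 ▸ nhdsGT_neBot y
  obtain ⟨z, hzc, hz⟩ := ((hD y hy).eventually_lt_const hc).and self_mem_nhdsWithin |>.exists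
  have hzI : z ∈ Ioo a b := ⟨hy.1.trans hz.1, hz.2⟩
  have hfy : Tendsto f (𝓝[Ioo y b] y) (𝓝 (f y)) :=
    tendsto_of_tendsto_psiSlope hΨy (hD y hy) <| eventually_of_mem self_mem_nhdsWithin
      fun x hx => (hΨ hy ⟨hy.1.trans hx.1, hx.2⟩ hx.1).ne
  have hslope : Tendsto (psiSlope Ψ f · z) (𝓝[Ioo y b] y) (𝓝 (psiSlope Ψ f y z)) :=
    (hfy.sub_const _).div (hΨy.sub_const _) (sub_ne_zero.2 (hΨ hy hzI hz.1).ne')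
  rw [psiSlope_comm] at hzc
  have hleft : ∀ᶠ y' in 𝓝[Ioo y b] y, y' < z :=
    eventually_nhdsWithin_of_eventually_nhds (eventually_lt_nhds hz.1)
  filter_upwards [hslope.eventually_lt_const hzc, hleft, self_mem_nhdsWithin]
    with y' hy'c hy'z hy'
  have hy'I : y' ∈ Ioo a b := ⟨hy.1.trans hy'.1, hy'.2⟩
  calc D y' ≤ psiSlope Ψ f z y' := hf.le_psiSlope hΨ hy'I ⟨hy'z, hz.2⟩ (hD y' hy'I)
    _ = psiSlope Ψ f y' z := psiSlope_comm Ψ f z y'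
    _ < c := hy'c

end PsiConcave

theorem stmt_3_general (a b : ℝ) (Ψ f Dp : ℝ → ℝ)
    (hΨanti : StrictAntiOn Ψ (Set.Ioo a b))
    (hΨrc : ∀ y ∈ Set.Ioo a b, Tendsto Ψ (𝓝[Set.Ioo y b] y) (𝓝 (Ψ y)))
    (hf : PsiConcaveOn Ψ f a b)
    (hDp : ∀ y ∈ Set.Ioo a b,
      Tendsto (fun x => (f x - f y) / (Ψ x - Ψ y)) (𝓝[Set.Ioo y b] y) (𝓝 (Dp y))) :
    ∀ y ∈ Set.Ioo a b, Tendsto Dp (𝓝[Set.Ioo y b] y) (𝓝 (Dp y)) := by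
  intro y hy
  refine tendsto_order.2 ⟨fun c hc => ?_,
    fun c hc => hf.eventually_lt_of_tendsto_psiSlope hΨanti hy (hΨrc y hy) hDp hc⟩
  filter_upwards [self_mem_nhdsWithin] with y' hy'
  exact hc.trans_le <|
    hf.monotoneOn_of_tendsto_psiSlope hΨanti hDp hy ⟨hy.1.trans hy'.1, hy'.2⟩ hy'.1.le

theorem stmt_3 (a b : ℝ) (Ψ f Dp : ℝ → ℝ)
    (hΨanti : StrictAntiOn Ψ (Set.Ioo a b))
    (hΨpos : ∀ x ∈ Set.Ioo a b, 0 ≤ Ψ x)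
    (hΨrc : ∀ y ∈ Set.Ioo a b, Tendsto Ψ (𝓝[Set.Ioo y b] y) (𝓝 (Ψ y)))
    (hf : PsiConcaveOn Ψ f a b)
    (hDp : ∀ y ∈ Set.Ioo a b,
      Tendsto (fun x => (f x - f y) / (Ψ x - Ψ y)) (𝓝[Set.Ioo y b] y) (𝓝 (Dp y))) :
    ∀ y ∈ Set.Ioo a b, Tendsto Dp (𝓝[Set.Ioo y b] y) (𝓝 (Dp y)) :=
  stmt_3_general a b Ψ f Dp hΨanti hΨrc hf hDp
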